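/- arXiv:2106.08283 — 2 statements merged into one kernel-verified Lean document; each statement's English description precedes it below -/
import Mathlib

section
/- Let X and Y be measurable spaces and K a Markov kernel from X to Y. Set η_TV(K) = sup over x₁, x₂ ∈ X of D_TV(K(x₁), K(x₂)). Then for all probability measures μ, ν on X: D_TV(μK, νK) ≤ η_TV(K) · D_TV(μ, ν). -/
open MeasureTheory ProbabilityTheory Real
open scoped Classical RealInnerProductSpace BigOperators

/-- KL divergence: `∫ log(dμ/dν) dμ` if `μ ≪ ν`, else `⊤`. -/
noncomputable def klDiv {Ω : Type*} [MeasurableSpace Ω] (μ ν : Measure Ω) : EReal :=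
  if μ ≪ ν then ((∫ x, Real.log ((μ.rnDeriv ν x).toReal) ∂μ : ℝ) : EReal) else ⊤

/-- Total variation distance between measures. -/
noncomputable def tvDist {Ω : Type*} [MeasurableSpace Ω] (μ ν : Measure Ω) : ℝ :=
  ⨆ A : {s : Set Ω // MeasurableSet s}, |(μ A.1).toReal - (ν A.1).toReal|

/-- Isotropic Gaussian `N(m, σ²I)` on `ℝ^d` (as `EuclideanSpace ℝ (Fin d)`):
the product of coordinatewise real Gaussians with means `m i` and variance `σ²`. -/
noncomputable def gaussianPi {d : ℕ} (m : EuclideanSpace ℝ (Fin d)) (σ : ℝ) :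
    Measure (EuclideanSpace ℝ (Fin d)) :=
  (Measure.pi fun i => gaussianReal (m i) ⟨σ ^ 2, sq_nonneg σ⟩).map
    (MeasurableEquiv.toLp 2 (Fin d → ℝ))

/-- Standard Gaussian cumulative distribution function `Φ`. -/
noncomputable def stdGaussCDF (x : ℝ) : ℝ := cdf (gaussianReal 0 1) x

/-- Clipping map `Clip_ρ(w) = w / max(1, ‖w‖/ρ)`. -/
noncomputable def clip {H : Type*} [NormedAddCommGroup H] [NormedSpace ℝ H] (ρ : ℝ) (w : H) : H :=
  (max 1 (‖w‖ / ρ))⁻¹ • w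

/-!
Test the contraction on a measurable set `A`. The function `f x = K x A` takes values in an
interval `[a, a + η]`, because any two of its values differ by at most the Dobrushin coefficient
`η`. Splitting `X` along a Hahn set `S` of `μ - ν`, the measure `μ - ν` is nonnegative on `S` and
nonpositive on `Sᶜ`, with opposite total masses `± (μ S - ν S)`. Hence
`∫ f dμ - ∫ f dν ≤ (a + η) (μ S - ν S) - a (μ S - ν S) = η (μ S - ν S) ≤ η D_TV(μ, ν)`.
-/

open Set

lemma tvDist_comm {Ω : Type*} [MeasurableSpace Ω] (μ ν : Measure Ω) :
    tvDist μ ν = tvDist ν μ := by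
  simp only [tvDist, abs_sub_comm]

section TotalVariation

variable {Ω : Type*} [MeasurableSpace Ω] (μ ν : Measure Ω) [IsProbabilityMeasure μ]
  [IsProbabilityMeasure ν]

lemma abs_measureReal_sub_le_one (s : Set Ω) : |μ.real s - ν.real s| ≤ 1 :=
  abs_sub_le_iff.2
    ⟨by linarith [measureReal_le_one (μ := μ) (s := s), measureReal_nonneg (μ := ν) (s := s)],
      by linarith [measureReal_le_one (μ := ν) (s := s), measureReal_nonneg (μ := μ) (s := s)]⟩

lemma abs_measureReal_sub_le_tvDist {s : Set Ω} (hs : MeasurableSet s) :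
    |μ.real s - ν.real s| ≤ tvDist μ ν :=
  le_ciSup (f := fun A : {s : Set Ω // MeasurableSet s} => |μ.real A.1 - ν.real A.1|)
    ⟨1, by rintro _ ⟨A, rfl⟩; exact abs_measureReal_sub_le_one μ ν A.1⟩ ⟨s, hs⟩

lemma tvDist_le_one : tvDist μ ν ≤ 1 :=
  ciSup_le fun A => abs_measureReal_sub_le_one μ ν A.1

end TotalVariation

lemma mem_Icc_ciInf_add_of_forall_sub_le {ι : Type*} [Nonempty ι] {f : ι → ℝ}
    (hf : BddBelow (range f)) {η : ℝ} (h : ∀ i j, f i - f j ≤ η) (i : ι) :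
    f i ∈ Icc (⨅ j, f j) ((⨅ j, f j) + η) :=
  ⟨ciInf_le hf i, sub_le_iff_le_add.1 (le_ciInf fun j => sub_le_comm.1 (h i j))⟩

section Integral

variable {X : Type*} [MeasurableSpace X]

lemma integral_sub_integral_le_of_le {μ ν : Measure X} [IsFiniteMeasure μ] (hνμ : ν ≤ μ)
    {f : X → ℝ} (hf : Integrable f μ) {c : ℝ} (hfc : ∀ x, f x ≤ c) :
    ∫ x, f x ∂μ - ∫ x, f x ∂ν ≤ c * (μ.real univ - ν.real univ) := by
  have : IsFiniteMeasure ν := isFiniteMeasure_of_le μ hνμ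
  have hf' : Integrable f (μ - ν) := hf.mono_measure Measure.sub_le
  calc ∫ x, f x ∂μ - ∫ x, f x ∂ν = ∫ x, f x ∂(μ - ν) := by
        conv_lhs => rw [← Measure.sub_add_cancel_of_le hνμ]
        rw [integral_add_measure hf' (hf.mono_measure hνμ), add_sub_cancel_right]
    _ ≤ ∫ _, c ∂(μ - ν) := integral_mono hf' (integrable_const c) hfc
    _ = c * (μ.real univ - ν.real univ) := by
        rw [integral_const, smul_eq_mul, mul_comm, measureReal_def,
          Measure.sub_apply .univ hνμ, ENNReal.toReal_sub_of_le (hνμ univ) (measure_ne_top _ _)]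
        rfl

variable (μ ν : Measure X) [IsProbabilityMeasure μ] [IsProbabilityMeasure ν]

lemma integral_sub_integral_le_mul_tvDist {f : X → ℝ} (hf : Measurable f) {a η : ℝ}
    (hfa : ∀ x, f x ∈ Icc a (a + η)) :
    ∫ x, f x ∂μ - ∫ x, f x ∂ν ≤ η * tvDist μ ν := by
  have hint (ρ : Measure X) [IsFiniteMeasure ρ] : Integrable f ρ :=
    .of_bound hf.aestronglyMeasurable (max |a| |a + η|)
      (ae_of_all _ fun x => abs_le_max_abs_abs (hfa x).1 (hfa x).2)
  obtain ⟨x₀⟩ := nonempty_of_isProbabilityMeasure μ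
  have hη : 0 ≤ η := by linarith [(hfa x₀).1, (hfa x₀).2]
  obtain ⟨S, hS⟩ := exists_isHahnDecomposition ν μ
  have hon : ∫ x in S, f x ∂μ - ∫ x in S, f x ∂ν ≤ (a + η) * (μ.real S - ν.real S) := by
    simpa only [measureReal_restrict_apply_univ] using
      integral_sub_integral_le_of_le hS.le_on (hint _) fun x => (hfa x).2
  have hoff : ∫ x in Sᶜ, f x ∂μ - ∫ x in Sᶜ, f x ∂ν ≤ -a * (μ.real S - ν.real S) := by
    have := integral_sub_integral_le_of_le hS.ge_on_compl (hint _).neg (c := -a)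
      fun x => neg_le_neg (hfa x).1
    simp only [Pi.neg_apply, integral_neg, measureReal_restrict_apply_univ,
      probReal_compl_eq_one_sub hS.measurableSet] at this
    linarith
  have hmass : μ.real S - ν.real S ≤ tvDist μ ν :=
    (le_abs_self _).trans (abs_measureReal_sub_le_tvDist μ ν hS.measurableSet)
  rw [← integral_add_compl hS.measurableSet (hint μ), ← integral_add_compl hS.measurableSet (hint ν)]
  linarith [mul_le_mul_of_nonneg_left hmass hη]

lemma abs_integral_sub_integral_le_mul_tvDist {f : X → ℝ} (hf : Measurable f) {a η : ℝ}
    (hfa : ∀ x, f x ∈ Icc a (a + η)) :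
    |∫ x, f x ∂μ - ∫ x, f x ∂ν| ≤ η * tvDist μ ν :=
  abs_sub_le_iff.2 ⟨integral_sub_integral_le_mul_tvDist μ ν hf hfa,
    tvDist_comm μ ν ▸ integral_sub_integral_le_mul_tvDist ν μ hf hfa⟩

end Integral

lemma measureReal_bind_eq_integral {X Y : Type*} [MeasurableSpace X] [MeasurableSpace Y]
    (K : Kernel X Y) [IsFiniteKernel K] (μ : Measure X) {s : Set Y} (hs : MeasurableSet s) :
    (μ.bind K).real s = ∫ x, (K x).real s ∂μ := by
  rw [measureReal_def, Measure.bind_apply hs K.aemeasurable,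
    ← integral_toReal (K.measurable_coe hs).aemeasurable (ae_of_all _ fun x => measure_lt_top _ _)]
  rfl

theorem tv_dobrushin_contraction {X Y : Type*} [MeasurableSpace X] [MeasurableSpace Y]
    (K : Kernel X Y) [IsMarkovKernel K]
    (μ ν : Measure X) [IsProbabilityMeasure μ] [IsProbabilityMeasure ν] :
    tvDist (μ.bind K) (ν.bind K)
      ≤ (⨆ x₁ : X, ⨆ x₂ : X, tvDist (K x₁) (K x₂)) * tvDist μ ν := by
  have := nonempty_of_isProbabilityMeasure μ
  set η := ⨆ x₁ : X, ⨆ x₂ : X, tvDist (K x₁) (K x₂)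
  have hη (x₁ x₂ : X) : tvDist (K x₁) (K x₂) ≤ η :=
    (le_ciSup (f := fun x => tvDist (K x₁) (K x)) ⟨1, by
        rintro _ ⟨x, rfl⟩; exact tvDist_le_one _ _⟩ x₂).trans
      (le_ciSup (f := fun x => ⨆ x', tvDist (K x) (K x')) ⟨1, by
        rintro _ ⟨x, rfl⟩; exact ciSup_le fun _ => tvDist_le_one _ _⟩ x₁)
  refine ciSup_le fun ⟨A, hA⟩ => ?_
  set f : X → ℝ := fun x => (K x).real A
  have hosc (x y : X) : f x - f y ≤ η :=
    (le_abs_self _).trans ((abs_measureReal_sub_le_tvDist _ _ hA).trans (hη x y))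
  have hbdd : BddBelow (range f) := ⟨0, by rintro _ ⟨x, rfl⟩; exact measureReal_nonneg⟩
  change |(μ.bind K).real A - (ν.bind K).real A| ≤ η * tvDist μ ν
  rw [measureReal_bind_eq_integral K μ hA, measureReal_bind_eq_integral K ν hA]
  exact abs_integral_sub_integral_le_mul_tvDist μ ν (K.measurable_coe hA).ennreal_toReal
    (mem_Icc_ciInf_add_of_forall_sub_le hbdd hosc)
end

section
/- Let d ≥ 1, let Y be a finite nonempty type, let h : ℝ^d → Y be measurable, and let σ > 0. For v ∈ ℝ^d and c ∈ Y define H_c(v) = N(v, σ²I){u ∈ ℝ^d : h(u) = c}. Let w, w' ∈ ℝ^d, c_A ∈ Y, and p_A, p_B ∈ [0,1] with p_B ≤ p_A, and suppose H_{c_A}(w') ≥ p_A and H_c(w') ≤ p_B for every c ≠ c_A. If ‖w − w'‖² ≤ −2σ² · log(1 − (√p_A − √p_B)²), then for every c ≠ c_A, H_{c_A}(w) ≥ H_c(w); that is, the Gaussian-parameter-smoothed classifier gives the same top prediction c_A at parameters w as at parameters w'. -/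
open MeasureTheory ProbabilityTheory Real
open scoped Classical RealInnerProductSpace BigOperators

/-! Write `ν = N(w', σ²I)` and `μ = N(w, σ²I)`. Then `μ = ν.withDensity (exp ℓ)` for an affine `ℓ`
with `∫ ℓ dμ = ‖w - w'‖² / (2σ²)`, the KL divergence. For `g > 0`, the Donsker–Varadhan
inequality `∫ log g dμ ≤ ∫ ℓ dμ + log ∫ g dν` holds. Apply it to the function `g` that equals `r`
on `A = {h = c_A}`, `r⁻¹` on `B = {h = c}` and `1` elsewhere, with `r = √(ν B / ν A) < 1`. This `r`
makes `∫ g dν = 1 - (√(ν A) - √(ν B))²`, which is at most `1 - (√p_A - √p_B)²`. So the radius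
bound gives `(μ A - μ B) · log r ≤ 0`, that is, `μ B ≤ μ A`. -/

open scoped ENNReal NNReal

lemma integral_log_le_integral_add_log_of_eq_withDensity_exp {Ω : Type*} [MeasurableSpace Ω]
    {μ ν : Measure Ω} [IsProbabilityMeasure μ] {ℓ g : Ω → ℝ}
    (hμ : μ = ν.withDensity fun x => ENNReal.ofReal (exp (ℓ x))) (hℓ : Measurable ℓ)
    (hℓμ : Integrable ℓ μ) (hg_pos : ∀ x, 0 < g x) (hgν : Integrable g ν)
    (hZ : 0 < ∫ x, g x ∂ν) (hlog : Integrable (fun x => log (g x)) μ) :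
    ∫ x, log (g x) ∂μ ≤ ∫ x, ℓ x ∂μ + log (∫ x, g x ∂ν) := by
  set Z := ∫ x, g x ∂ν
  have hdens : Measurable fun x => ENNReal.ofReal (exp (ℓ x)) := by fun_prop
  have hfin : ∀ᵐ x ∂ν, ENNReal.ofReal (exp (ℓ x)) < ∞ :=
    ae_of_all _ fun _ => ENNReal.ofReal_lt_top
  have hcancel : (fun x => (ENNReal.ofReal (exp (ℓ x))).toReal • (g x * exp (-ℓ x))) = g := by
    funext x
    rw [ENNReal.toReal_ofReal (exp_pos _).le, smul_eq_mul, exp_neg]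
    field_simp
  have htilt_int : Integrable (fun x => g x * exp (-ℓ x)) μ := by
    rw [hμ, integrable_withDensity_iff_integrable_smul' hdens hfin, hcancel]
    exact hgν
  have htilt : ∫ x, g x * exp (-ℓ x) ∂μ = Z := by
    rw [hμ, integral_withDensity_eq_integral_toReal_smul hdens hfin, hcancel]
  have hpoint : ∀ x, log (g x) ≤ ℓ x + log Z + (g x * exp (-ℓ x) / Z - 1) := fun x => by
    have := log_le_sub_one_of_pos (div_pos (mul_pos (hg_pos x) (exp_pos (-ℓ x))) hZ)
    rw [log_div (mul_pos (hg_pos x) (exp_pos _)).ne' hZ.ne', log_mul (hg_pos x).ne' (exp_pos _).ne',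
      log_exp] at this
    linarith
  have hrem : Integrable (fun x => g x * exp (-ℓ x) / Z - 1) μ :=
    (htilt_int.div_const Z).sub (integrable_const 1)
  have hshift : Integrable (fun x => ℓ x + log Z) μ := hℓμ.add (integrable_const _)
  calc ∫ x, log (g x) ∂μ ≤ ∫ x, ℓ x + log Z + (g x * exp (-ℓ x) / Z - 1) ∂μ :=
        integral_mono hlog (hshift.add hrem) hpoint
    _ = ∫ x, ℓ x ∂μ + log Z := by
        rw [integral_add hshift hrem, integral_add hℓμ (integrable_const _),
          integral_sub (htilt_int.div_const Z) (integrable_const 1), integral_div, htilt,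
          div_self hZ.ne']
        simp

section ThreeValued

variable {Ω : Type*} {A B : Set Ω}

lemma ite_mem_ite_mem_eq_add_indicator (hAB : Disjoint A B) (α β γ : ℝ) :
    (fun x => if x ∈ A then α else if x ∈ B then β else γ)
      = fun x => γ + (A.indicator (fun _ => α - γ) x + B.indicator (fun _ => β - γ) x) := by
  funext x
  by_cases hxA : x ∈ A
  · simp [hxA, Set.disjoint_left.mp hAB hxA]
  · by_cases hxB : x ∈ B <;> simp [hxA, hxB]

variable [MeasurableSpace Ω] {m : Measure Ω}

lemma integrable_ite_mem_ite_mem [IsFiniteMeasure m] (hA : MeasurableSet A)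
    (hB : MeasurableSet B) (hAB : Disjoint A B) (α β γ : ℝ) :
    Integrable (fun x => if x ∈ A then α else if x ∈ B then β else γ) m := by
  rw [ite_mem_ite_mem_eq_add_indicator hAB]
  exact (integrable_const γ).add
    (((integrable_const _).indicator hA).add ((integrable_const _).indicator hB))

lemma integral_ite_mem_ite_mem [IsProbabilityMeasure m] (hA : MeasurableSet A)
    (hB : MeasurableSet B) (hAB : Disjoint A B) (α β γ : ℝ) :
    ∫ x, (if x ∈ A then α else if x ∈ B then β else γ) ∂m
      = α * m.real A + β * m.real B + γ * (1 - m.real A - m.real B) := by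
  have hαA : Integrable (A.indicator fun _ => α - γ) m := (integrable_const _).indicator hA
  have hβB : Integrable (B.indicator fun _ => β - γ) m := (integrable_const _).indicator hB
  have hsum : Integrable
      (fun x => A.indicator (fun _ => α - γ) x + B.indicator (fun _ => β - γ) x) m :=
    hαA.add hβB
  rw [ite_mem_ite_mem_eq_add_indicator hAB, integral_add (integrable_const γ) hsum,
    integral_add hαA hβB, integral_indicator_const _ hA, integral_indicator_const _ hB]
  simp only [integral_const, probReal_univ, smul_eq_mul, one_mul]
  ring

end ThreeValued

lemma sq_sqrt_sub_sqrt_le {pA pB a b : ℝ} (hBA : pB ≤ pA) (hpA : pA ≤ a) (hpB : b ≤ pB) :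
    (√pA - √pB) ^ 2 ≤ (√a - √b) ^ 2 :=
  pow_le_pow_left₀ (sub_nonneg.mpr (sqrt_le_sqrt hBA))
    (sub_le_sub (sqrt_le_sqrt hpA) (sqrt_le_sqrt hpB)) 2

lemma sqrt_div_sqrt_mul_add_inv_mul {a b : ℝ} (ha : 0 < a) (hb : 0 < b) :
    √b / √a * a + (√b / √a)⁻¹ * b = 2 * √a * √b := by
  have hsa : 0 < √a := sqrt_pos.mpr ha
  have hsb : 0 < √b := sqrt_pos.mpr hb
  rw [← sq_sqrt ha.le, ← sq_sqrt hb.le, sqrt_sq hsa.le, sqrt_sq hsb.le]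
  field_simp
  ring

lemma one_sub_sq_sqrt_sub_sqrt_pos {a b : ℝ} (ha : a ≤ 1) (hb : 0 < b) (hba : b ≤ a) :
    0 < 1 - (√a - √b) ^ 2 := by
  have h1 : √a ≤ 1 := sqrt_le_one.mpr ha
  have h2 : 0 < √b := sqrt_pos.mpr hb
  have h3 : √b ≤ √a := sqrt_le_sqrt hba
  nlinarith

theorem measureReal_le_of_integral_le_neg_log {Ω : Type*} [MeasurableSpace Ω]
    {μ ν : Measure Ω} [IsProbabilityMeasure μ] [IsProbabilityMeasure ν] {ℓ : Ω → ℝ}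
    (hμ : μ = ν.withDensity fun x => ENNReal.ofReal (exp (ℓ x))) (hℓ : Measurable ℓ)
    (hℓμ : Integrable ℓ μ) {A B : Set Ω} (hA : MeasurableSet A) (hB : MeasurableSet B)
    (hAB : Disjoint A B) {pA pB : ℝ} (hpA : pA ≤ ν.real A) (hpB : ν.real B ≤ pB)
    (hBA : pB < pA) (hKL : ∫ x, ℓ x ∂μ ≤ -log (1 - (√pA - √pB) ^ 2)) :
    μ.real B ≤ μ.real A := by
  set a := ν.real A
  set b := ν.real B
  rcases (measureReal_nonneg : 0 ≤ b).eq_or_lt with hb0 | hb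
  · have hμB : μ B = 0 := hμ ▸ withDensity_absolutelyContinuous _ _
      ((measureReal_eq_zero_iff).mp hb0.symm)
    simp [Measure.real, hμB]
  have ha : 0 < a := by linarith
  set r := √b / √a
  have hr : 0 < r := div_pos (sqrt_pos.mpr hb) (sqrt_pos.mpr ha)
  have hlog_r : log r < 0 :=
    log_neg hr ((div_lt_one (sqrt_pos.mpr ha)).mpr (sqrt_lt_sqrt hb.le (by linarith)))
  set k := 1 - (√a - √b) ^ 2
  have hk : 0 < k := one_sub_sq_sqrt_sub_sqrt_pos measureReal_le_one hb (by linarith)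
  set g : Ω → ℝ := fun x => if x ∈ A then r else if x ∈ B then r⁻¹ else 1
  have hg_pos : ∀ x, 0 < g x := fun x => by
    simp only [g]
    split_ifs <;> positivity
  have hZ : ∫ x, g x ∂ν = k := by
    rw [integral_ite_mem_ite_mem hA hB hAB]
    linear_combination sqrt_div_sqrt_mul_add_inv_mul ha hb + sq_sqrt ha.le + sq_sqrt hb.le
  have hlog_g : (fun x => log (g x))
      = fun x => if x ∈ A then log r else if x ∈ B then -log r else 0 := by
    funext x
    simp only [g, apply_ite log, log_inv, log_one]
  have hDV := integral_log_le_integral_add_log_of_eq_withDensity_exp hμ hℓ hℓμ hg_pos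
    (integrable_ite_mem_ite_mem hA hB hAB _ _ _) (hZ ▸ hk)
    (hlog_g ▸ integrable_ite_mem_ite_mem hA hB hAB _ _ _)
  rw [hZ, hlog_g, integral_ite_mem_ite_mem hA hB hAB] at hDV
  have hk_le : log k ≤ log (1 - (√pA - √pB) ^ 2) :=
    log_le_log hk (by linarith [sq_sqrt_sub_sqrt_le hBA.le hpA hpB])
  have hprod : log r * (μ.real A - μ.real B) ≤ 0 := by linarith
  exact sub_nonneg.mp (nonneg_of_mul_nonpos_right hprod hlog_r)

lemma gaussianReal_eq_withDensity_exp {v : ℝ≥0} (hv : v ≠ 0) (a b : ℝ) :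
    gaussianReal a v = (gaussianReal b v).withDensity
      fun x => ENNReal.ofReal (exp (((x - b) ^ 2 - (x - a) ^ 2) / (2 * v))) := by
  rw [gaussianReal_of_var_ne_zero a hv, gaussianReal_of_var_ne_zero b hv,
    ← withDensity_mul _ (measurable_gaussianPDF _ _) (by fun_prop)]
  congr 1
  funext x
  simp only [Pi.mul_apply, gaussianPDF, gaussianPDFReal_def]
  rw [← ENNReal.ofReal_mul (by positivity), mul_assoc _ (rexp _), ← exp_add]
  congr 3
  ring

lemma lintegral_fintype_prod_eq_prod {ι : Type*} [Fintype ι] {α : ι → Type*}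
    [∀ i, MeasurableSpace (α i)] (μ : ∀ i, Measure (α i)) [∀ i, IsProbabilityMeasure (μ i)]
    {f : ∀ i, α i → ℝ≥0∞} (hf : ∀ i, Measurable (f i)) :
    ∫⁻ x, ∏ i, f i (x i) ∂Measure.pi μ = ∏ i, ∫⁻ t, f i t ∂μ i := by
  rw [lintegral_prod_eq_prod_lintegral_of_indepFun _ _
    (iIndepFun_pi fun i => (hf i).aemeasurable) fun i => (hf i).comp (measurable_pi_apply i)]
  exact Finset.prod_congr rfl fun i _ => (measurePreserving_eval μ i).lintegral_comp (hf i)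

lemma MeasureTheory.Measure.pi_eq_withDensity_prod {ι : Type*} [Fintype ι] {α : ι → Type*}
    [∀ i, MeasurableSpace (α i)] {μ ν : ∀ i, Measure (α i)} [∀ i, IsProbabilityMeasure (μ i)]
    [∀ i, SigmaFinite (ν i)] {f : ∀ i, α i → ℝ≥0∞} (hf : ∀ i, Measurable (f i))
    (hν : ∀ i, ν i = (μ i).withDensity (f i)) :
    Measure.pi ν = (Measure.pi μ).withDensity fun x => ∏ i, f i (x i) := by
  refine Measure.pi_eq fun s hs => ?_
  have hind : (Set.univ.pi s).indicator (fun x => ∏ i, f i (x i))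
      = fun x => ∏ i, (s i).indicator (f i) (x i) := by
    funext x
    simp only [Set.indicator, Set.mem_univ_pi, Fintype.prod_ite_zero]
  rw [withDensity_apply _ (MeasurableSet.univ_pi hs),
    ← lintegral_indicator (MeasurableSet.univ_pi hs), hind,
    lintegral_fintype_prod_eq_prod μ fun i => (hf i).indicator (hs i)]
  exact Finset.prod_congr rfl fun i _ => by
    rw [hν i, withDensity_apply _ (hs i), lintegral_indicator (hs i)]

section Coordinates

variable {ι : Type*} [Fintype ι] {α : ι → Type*} [∀ i, MeasurableSpace (α i)]
  {μ : ∀ i, Measure (α i)} [∀ i, IsProbabilityMeasure (μ i)] {f : ∀ i, α i → ℝ}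

lemma integrable_sum_comp_eval (hf : ∀ i, Integrable (f i) (μ i)) :
    Integrable (fun x => ∑ i, f i (x i)) (Measure.pi μ) :=
  integrable_finsetSum _ fun i _ => integrable_comp_eval (hf i)

lemma integral_sum_comp_eval (hf : ∀ i, Integrable (f i) (μ i)) :
    ∫ x, ∑ i, f i (x i) ∂Measure.pi μ = ∑ i, ∫ t, f i t ∂μ i := by
  rw [integral_finsetSum _ fun i _ => integrable_comp_eval (hf i)]
  exact Finset.sum_congr rfl fun i _ => integral_comp_eval (hf i).aestronglyMeasurable

end Coordinates

lemma sq_sub_sq_div_eq_affine (a b : ℝ) (v : ℝ≥0) :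
    (fun x : ℝ => ((x - b) ^ 2 - (x - a) ^ 2) / (2 * v))
      = fun x => (a - b) / v * x + (b ^ 2 - a ^ 2) / (2 * v) := by
  funext x
  ring

lemma integrable_id_gaussianReal (a : ℝ) (v : ℝ≥0) :
    Integrable (fun x => x) (gaussianReal a v) :=
  (memLp_id_gaussianReal 1).integrable le_rfl

lemma integrable_sq_sub_sq_gaussianReal (a b : ℝ) (v : ℝ≥0) :
    Integrable (fun x => ((x - b) ^ 2 - (x - a) ^ 2) / (2 * v)) (gaussianReal a v) := by
  rw [sq_sub_sq_div_eq_affine]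
  exact ((integrable_id_gaussianReal a v).const_mul _).add (integrable_const _)

lemma integral_sq_sub_sq_gaussianReal (a b : ℝ) {v : ℝ≥0} (hv : v ≠ 0) :
    ∫ x, ((x - b) ^ 2 - (x - a) ^ 2) / (2 * v) ∂gaussianReal a v = (a - b) ^ 2 / (2 * v) := by
  rw [sq_sub_sq_div_eq_affine, integral_add ((integrable_id_gaussianReal a v).const_mul _)
    (integrable_const _), integral_const_mul, integral_id_gaussianReal]
  simp only [integral_const, probReal_univ, smul_eq_mul, one_mul]
  field_simp
  ring

noncomputable def gaussianLLR {ι : Type*} [Fintype ι] (a b : ι → ℝ) (v : ℝ≥0)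
    (x : ι → ℝ) : ℝ :=
  ∑ i, ((x i - b i) ^ 2 - (x i - a i) ^ 2) / (2 * v)

section GaussianLLR

variable {ι : Type*} [Fintype ι] (a b : ι → ℝ) {v : ℝ≥0}

lemma measurable_gaussianLLR : Measurable (gaussianLLR a b v) := by
  unfold gaussianLLR
  fun_prop

lemma pi_gaussianReal_eq_withDensity (hv : v ≠ 0) :
    Measure.pi (fun i => gaussianReal (a i) v)
      = (Measure.pi fun i => gaussianReal (b i) v).withDensity
          fun x => ENNReal.ofReal (exp (gaussianLLR a b v x)) := by
  rw [Measure.pi_eq_withDensity_prod (fun i => by fun_prop)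
    fun i => gaussianReal_eq_withDensity_exp hv (a i) (b i)]
  congr 1
  funext x
  rw [gaussianLLR, exp_sum, ENNReal.ofReal_prod_of_nonneg fun i _ => (exp_pos _).le]

lemma integrable_gaussianLLR :
    Integrable (gaussianLLR a b v) (Measure.pi fun i => gaussianReal (a i) v) :=
  integrable_sum_comp_eval fun i => integrable_sq_sub_sq_gaussianReal (a i) (b i) v

lemma integral_gaussianLLR (hv : v ≠ 0) :
    ∫ x, gaussianLLR a b v x ∂Measure.pi (fun i => gaussianReal (a i) v)
      = ∑ i, (a i - b i) ^ 2 / (2 * v) := by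
  unfold gaussianLLR
  rw [integral_sum_comp_eval fun i => integrable_sq_sub_sq_gaussianReal (a i) (b i) v]
  exact Finset.sum_congr rfl fun i _ => integral_sq_sub_sq_gaussianReal (a i) (b i) hv

end GaussianLLR

lemma gaussianPi_apply {d : ℕ} (m : EuclideanSpace ℝ (Fin d)) (σ : ℝ)
    (S : Set (EuclideanSpace ℝ (Fin d))) :
    gaussianPi m σ S = Measure.pi (fun i => gaussianReal (m i) ⟨σ ^ 2, sq_nonneg σ⟩)
      (MeasurableEquiv.toLp 2 (Fin d → ℝ) ⁻¹' S) :=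
  MeasurableEquiv.map_apply _ _

lemma sum_sq_sub_div_eq_norm_sub_sq_div {d : ℕ} (w w' : EuclideanSpace ℝ (Fin d)) (c : ℝ) :
    ∑ i, (w i - w' i) ^ 2 / c = ‖w - w'‖ ^ 2 / c := by
  rw [EuclideanSpace.norm_sq_eq, Finset.sum_div]
  simp

theorem gaussianPi_le_gaussianPi_of_norm_sub_sq_le {d : ℕ} {σ : ℝ} (hσ : 0 < σ)
    {w w' : EuclideanSpace ℝ (Fin d)} {S T : Set (EuclideanSpace ℝ (Fin d))}
    (hS : MeasurableSet S) (hT : MeasurableSet T) (hST : Disjoint S T) {pA pB : ℝ}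
    (hpA : ENNReal.ofReal pA ≤ gaussianPi w' σ S) (hpB₀ : 0 ≤ pB)
    (hpB : gaussianPi w' σ T ≤ ENNReal.ofReal pB) (hBA : pB ≤ pA)
    (hrad : ‖w - w'‖ ^ 2 ≤ -2 * σ ^ 2 * log (1 - (√pA - √pB) ^ 2)) :
    gaussianPi w σ T ≤ gaussianPi w σ S := by
  rcases hBA.eq_or_lt with heq | hlt
  · obtain rfl : w = w' := by
      have hrad₀ : ‖w - w'‖ ^ 2 ≤ 0 := by simpa [heq] using hrad
      exact sub_eq_zero.mp (norm_eq_zero.mp (by nlinarith [norm_nonneg (w - w')]))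
    exact hpB.trans ((ENNReal.ofReal_le_ofReal hBA).trans hpA)
  simp only [gaussianPi_apply] at hpA hpB ⊢
  set v : ℝ≥0 := ⟨σ ^ 2, sq_nonneg σ⟩
  have hv : v ≠ 0 := fun h0 => (pow_pos hσ 2).ne' (congrArg NNReal.toReal h0)
  have hKL : ∫ x, gaussianLLR w w' v x ∂Measure.pi (fun i => gaussianReal (w i) v)
      ≤ -log (1 - (√pA - √pB) ^ 2) := by
    rw [integral_gaussianLLR _ _ hv, sum_sq_sub_div_eq_norm_sub_sq_div,
      div_le_iff₀ (by positivity), show (v : ℝ) = σ ^ 2 from rfl]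
    linarith
  rw [← ENNReal.toReal_le_toReal (measure_ne_top _ _) (measure_ne_top _ _)]
  exact measureReal_le_of_integral_le_neg_log (pi_gaussianReal_eq_withDensity _ _ hv)
    (measurable_gaussianLLR _ _) (integrable_gaussianLLR _ _)
    ((MeasurableEquiv.toLp 2 _).measurable hS) ((MeasurableEquiv.toLp 2 _).measurable hT)
    (hST.preimage _) ((ENNReal.ofReal_le_iff_le_toReal (measure_ne_top _ _)).mp hpA)
    (ENNReal.toReal_le_of_le_ofReal hpB₀ hpB) hlt hKL

theorem smoothed_prediction_consistency_radius_general (d : ℕ)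
    (Y : Type*) [MeasurableSpace Y] [MeasurableSingletonClass Y]
    (h : EuclideanSpace ℝ (Fin d) → Y) (hh : Measurable h) (σ : ℝ) (hσ : 0 < σ)
    (w w' : EuclideanSpace ℝ (Fin d)) (cA : Y) (pA pB : ℝ)
    (hpB : pB ∈ Set.Icc (0 : ℝ) 1) (hBA : pB ≤ pA)
    (hA : ENNReal.ofReal pA ≤ gaussianPi w' σ {u | h u = cA})
    (hB : ∀ c, c ≠ cA → gaussianPi w' σ {u | h u = c} ≤ ENNReal.ofReal pB)
    (hrad : ‖w - w'‖ ^ 2 ≤ -2 * σ ^ 2 * Real.log (1 - (Real.sqrt pA - Real.sqrt pB) ^ 2)) :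
    ∀ c, c ≠ cA → gaussianPi w σ {u | h u = c} ≤ gaussianPi w σ {u | h u = cA} := by
  intro c hc
  exact gaussianPi_le_gaussianPi_of_norm_sub_sq_le hσ (hh (measurableSet_singleton cA))
    (hh (measurableSet_singleton c)) (Set.disjoint_left.mpr fun u hu hu' => hc (hu'.symm.trans hu))
    hA hpB.1 (hB c hc) hBA hrad

theorem smoothed_prediction_consistency_radius (d : ℕ) (hd : 1 ≤ d)
    (Y : Type*) [Fintype Y] [Nonempty Y] [MeasurableSpace Y] [MeasurableSingletonClass Y]
    (h : EuclideanSpace ℝ (Fin d) → Y) (hh : Measurable h) (σ : ℝ) (hσ : 0 < σ)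
    (w w' : EuclideanSpace ℝ (Fin d)) (cA : Y) (pA pB : ℝ)
    (hpA : pA ∈ Set.Icc (0 : ℝ) 1) (hpB : pB ∈ Set.Icc (0 : ℝ) 1) (hBA : pB ≤ pA)
    (hA : ENNReal.ofReal pA ≤ gaussianPi w' σ {u | h u = cA})
    (hB : ∀ c, c ≠ cA → gaussianPi w' σ {u | h u = c} ≤ ENNReal.ofReal pB)
    (hrad : ‖w - w'‖ ^ 2 ≤ -2 * σ ^ 2 * Real.log (1 - (Real.sqrt pA - Real.sqrt pB) ^ 2)) :
    ∀ c, c ≠ cA → gaussianPi w σ {u | h u = c} ≤ gaussianPi w σ {u | h u = cA} :=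
  smoothed_prediction_consistency_radius_general d Y h hh σ hσ w w' cA pA pB hpB hBA hA hB hrad
end
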